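/- arXiv:1410.2202 — 9 statements merged into one kernel-verified Lean document; each statement's English description precedes it below -/
import Mathlib

section
/- Let p be a nonconstant polynomial with complex coefficients and let z₀ ∈ ℂ be a point with p(z₀) ≠ 0 and p'(z₀) ≠ 0. Then p has a root in the closed half-plane through z₀ whose outward normal is the complex number a = p(z₀)/p'(z₀); that is, there exists θ ∈ ℂ with p(θ) = 0 and Re( conj(a) · (θ − z₀) ) ≤ 0. -/
/-!
If `z₀` is not a root, the logarithmic derivative `p'/p = ∑_r 1/(z - r)` over the roots gives
`a · ∑_r 1/(z₀ - r) = 1` for `a = p(z₀)/p'(z₀)`. Some summand therefore has positive real part,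
and `Re(a/(z₀ - r))` has the sign of `Re(conj a · (z₀ - r))`, so that root `r` lies in the
open half-plane.
-/

open Polynomial ComplexConjugate

namespace Complex

theorem div_re_eq_conj_mul_re_div_normSq (a w : ℂ) :
    (a / w).re = (conj a * w).re / normSq w := by
  simp only [div_re, mul_re, conj_re, conj_im]
  ring

theorem exists_mem_re_pos_of_sum_re_pos {s : Multiset ℂ} (h : 0 < s.sum.re) :
    ∃ w ∈ s, 0 < w.re := by
  induction s using Multiset.induction with
  | empty => simp at h
  | cons w s ih =>
    by_cases hw : 0 < w.re
    · exact ⟨w, Multiset.mem_cons_self w s, hw⟩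
    · rw [Multiset.sum_cons, add_re] at h
      obtain ⟨v, hv, hv_pos⟩ := ih (by linarith)
      exact ⟨v, Multiset.mem_cons_of_mem hv, hv_pos⟩

end Complex

theorem newton_halfplane_contains_root_general
    (p : Polynomial ℂ)
    (z₀ : ℂ) (h1 : p.derivative.eval z₀ ≠ 0) :
    ∃ θ : ℂ, p.eval θ = 0 ∧
      ((starRingEnd ℂ) (p.eval z₀ / p.derivative.eval z₀) * (θ - z₀)).re ≤ 0 := by
  set a := p.eval z₀ / p.derivative.eval z₀
  by_cases hz₀ : p.eval z₀ = 0
  · exact ⟨z₀, hz₀, by simp⟩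
  have hp : p ≠ 0 := by rintro rfl; simp at h1
  have hlog := (IsAlgClosed.splits p).eval_derivative_eq_eval_mul_sum hz₀
  have hS : (p.roots.map fun r ↦ 1 / (z₀ - r)).sum ≠ 0 := by
    intro h
    rw [h, mul_zero] at hlog
    exact h1 hlog
  have hsum : (p.roots.map fun r ↦ a / (z₀ - r)).sum = 1 := by
    simp_rw [← mul_one_div a, Multiset.sum_map_mul_left, a, hlog]
    field_simp
  obtain ⟨_, hw, hpos⟩ := Complex.exists_mem_re_pos_of_sum_re_pos (s := p.roots.map _)
    (by rw [hsum, Complex.one_re]; exact one_pos)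
  obtain ⟨r, hr, rfl⟩ := Multiset.mem_map.mp hw
  refine ⟨r, (mem_roots hp).mp hr, ?_⟩
  rw [Complex.div_re_eq_conj_mul_re_div_normSq] at hpos
  have hside : 0 < (conj a * (z₀ - r)).re := lt_of_not_ge fun h ↦
    hpos.not_ge (div_nonpos_of_nonpos_of_nonneg h (Complex.normSq_nonneg _))
  rw [← neg_sub, mul_neg, Complex.neg_re]
  exact neg_nonpos.mpr hside.le

/-- Let `p` be a nonconstant complex polynomial and `z₀ ∈ ℂ` with
`p(z₀) ≠ 0` and `p'(z₀) ≠ 0`. Then `p` has a root in the closed half-plane through `z₀`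
whose outward normal is `a = p(z₀)/p'(z₀)`: there is `θ` with `p(θ) = 0` and
`Re(conj a · (θ - z₀)) ≤ 0`. -/
theorem newton_halfplane_contains_root
    (p : Polynomial ℂ) (hp : 1 ≤ p.natDegree)
    (z₀ : ℂ) (h0 : p.eval z₀ ≠ 0) (h1 : p.derivative.eval z₀ ≠ 0) :
    ∃ θ : ℂ, p.eval θ = 0 ∧
      ((starRingEnd ℂ) (p.eval z₀ / p.derivative.eval z₀) * (θ - z₀)).re ≤ 0 :=
  newton_halfplane_contains_root_general p z₀ h1
end

section
/- Let p(z) = aₙzⁿ + ⋯ + a₁z + a₀ be a polynomial with complex coefficients, aₙ ≠ 0, n ≥ 1. Then every root θ of p satisfies |θ| ≤ 2 · max{ |a_{n−k+1}/aₙ|^{1/(k−1)} : k = 2, …, n+1 }. -/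
/-!
With `M` the maximum in the bound, `‖aᵢ / aₙ‖ ≤ M ^ (n - i)` for every `i < n`. The triangle
inequality applied to `θⁿ = -∑_{i<n} (aᵢ / aₙ) θⁱ` gives `rⁿ ≤ ∑_{i<n} M ^ (n - i) rⁱ` for
`r = ‖θ‖`. Multiplying the right side by `r - M` telescopes it to `M (rⁿ - Mⁿ)`, which is
smaller than `(r - M) rⁿ` as soon as `r > 2M`.
-/

open Finset

lemma sum_pow_sub_mul_pow_lt_pow {K : Type*} [Field K] [LinearOrder K] [IsStrictOrderedRing K]
    {M r : K} (hM : 0 ≤ M) (hr : 2 * M < r) (n : ℕ) :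
    ∑ i ∈ range n, M ^ (n - i) * r ^ i < r ^ n := by
  have hrM : 0 < r - M := by linarith
  have hrn : 0 < r ^ n := pow_pos (by linarith) n
  have hgeom : (∑ i ∈ range n, M ^ (n - i) * r ^ i) * (r - M) = M * (r ^ n - M ^ n) := by
    rw [← geom_sum₂_mul, ← mul_assoc, mul_sum]
    congr 1
    refine sum_congr rfl fun i hi => ?_
    rw [show n - i = n - 1 - i + 1 by have := mem_range.mp hi; omega, pow_succ]
    ring
  refine lt_of_mul_lt_mul_right ?_ hrM.le
  rw [hgeom]
  nlinarith [pow_nonneg hM (n + 1), pow_succ M n]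

lemma norm_pow_le_sum_norm_div_mul_norm_pow {𝕜 : Type*} [NormedField 𝕜] {n : ℕ} {a : ℕ → 𝕜}
    (han : a n ≠ 0) {θ : 𝕜} (hθ : ∑ i ∈ range (n + 1), a i * θ ^ i = 0) :
    ‖θ‖ ^ n ≤ ∑ i ∈ range n, ‖a i / a n‖ * ‖θ‖ ^ i := by
  have hlead : θ ^ n = -∑ i ∈ range n, a i / a n * θ ^ i := by
    simp only [div_mul_eq_mul_div, ← sum_div]
    rw [sum_range_succ] at hθ
    field_simp
    linear_combination hθ
  calc ‖θ‖ ^ n = ‖∑ i ∈ range n, a i / a n * θ ^ i‖ := by rw [← norm_pow, hlead, norm_neg]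
    _ ≤ ∑ i ∈ range n, ‖a i / a n * θ ^ i‖ := norm_sum_le _ _
    _ = ∑ i ∈ range n, ‖a i / a n‖ * ‖θ‖ ^ i := by simp only [norm_mul, norm_pow]

lemma pow_le_of_rpow_inv_natCast_le {x M : ℝ} (hx : 0 ≤ x) (hM : 0 ≤ M) {m : ℕ} (hm : m ≠ 0)
    (h : x ^ (1 / (m : ℝ)) ≤ M) : x ≤ M ^ m := by
  rw [one_div, Real.rpow_inv_le_iff_of_pos hx hM (by positivity)] at h
  exact_mod_cast h

/-- Every root `θ` of `p(z) = aₙ zⁿ + ⋯ + a₀` (with `aₙ ≠ 0`, `n ≥ 1`)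
satisfies `|θ| ≤ 2 · max { |a_{n-k+1}/aₙ|^{1/(k-1)} : k = 2, …, n+1 }`. -/
theorem root_bound_m_two
    (n : ℕ) (hn : 1 ≤ n) (a : ℕ → ℂ) (han : a n ≠ 0)
    (θ : ℂ) (hθ : (∑ i ∈ Finset.range (n + 1), a i * θ ^ i) = 0) :
    ‖θ‖ ≤ 2 * (Finset.Icc 2 (n + 1)).sup' (Finset.nonempty_Icc.mpr (by omega))
      (fun k => ‖a (n + 1 - k) / a n‖ ^ (1 / ((k : ℝ) - 1))) := by
  set f : ℕ → ℝ := fun k => ‖a (n + 1 - k) / a n‖ ^ (1 / ((k : ℝ) - 1))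
  set M := (Finset.Icc 2 (n + 1)).sup' (Finset.nonempty_Icc.mpr (by omega)) f
  have hM : 0 ≤ M := (Real.rpow_nonneg (norm_nonneg _) _).trans
    (le_sup' f (show 2 ∈ Icc 2 (n + 1) by simp only [mem_Icc]; omega))
  have hcoeff : ∀ i ∈ range n, ‖a i / a n‖ ≤ M ^ (n - i) := by
    intro i hi
    have hi : i < n := mem_range.mp hi
    refine pow_le_of_rpow_inv_natCast_le (norm_nonneg _) hM (by omega) ?_
    have hexp : ((n + 1 - i : ℕ) : ℝ) - 1 = ((n - i : ℕ) : ℝ) := by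
      push_cast [Nat.cast_sub hi.le, Nat.cast_sub (by omega : i ≤ n + 1)]
      ring
    have hfi : f (n + 1 - i) = ‖a i / a n‖ ^ (1 / ((n - i : ℕ) : ℝ)) := by
      simp only [f, Nat.sub_sub_self (by omega : i ≤ n + 1), hexp]
    exact hfi ▸ le_sup' f (show n + 1 - i ∈ Icc 2 (n + 1) by simp only [mem_Icc]; omega)
  by_contra! h
  refine (norm_pow_le_sum_norm_div_mul_norm_pow han hθ).not_gt ?_
  calc ∑ i ∈ range n, ‖a i / a n‖ * ‖θ‖ ^ i ≤ ∑ i ∈ range n, M ^ (n - i) * ‖θ‖ ^ i :=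
        sum_le_sum fun i hi => mul_le_mul_of_nonneg_right (hcoeff i hi) (by positivity)
    _ < ‖θ‖ ^ n := sum_pow_sub_mul_pow_lt_pow hM h n
end

section
/- Let p(z) = aₙzⁿ + ⋯ + a₁z + a₀ be a polynomial with complex coefficients, aₙ ≠ 0, n ≥ 1, and set a₋₁ = 0. Let r₃ = (√5 − 1)/2 be the unique positive root of t² + t − 1. Then every root θ of p satisfies |θ| ≤ (1/r₃) · max{ | (a_{n−1}·a_{n−k+2} − aₙ·a_{n−k+1}) / aₙ² |^{1/(k−1)} : k = 3, …, n+2 }. -/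
/-!
Multiplying `p(θ) = 0` by `a_{n-1} - a_n θ` cancels the coefficient of `θ^n` and leaves
`a_n² θ^{n+1} = ∑_{j<n} (a_{n-1} a_j - a_n a_{j-1}) θ^j`. With `M` the maximum in the bound, the
`j`-th coefficient has modulus at most `|a_n|² M^{n+1-j}`, so
`|θ|^{n+1} ≤ ∑_{j<n} M^{n+1-j} |θ|^j`. If `M < r₃ |θ|`, the right-hand side is at most
`|θ|^{n+1} ∑_{k<n} r₃^{k+2} = |θ|^{n+1} (1 - r₃ⁿ)` because `r₃² = 1 - r₃`, a contradiction.
-/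

open Finset

section CommRing

variable {R : Type*} [CommRing R]

/-- The coefficient `a_{n-1} a_j - a_n a_{j-1}`; the paper's quantity for `k` is the case
`j = n - k + 2`. -/
def detCoeff (a : ℤ → R) (n j : ℤ) : R := a (n - 1) * a j - a n * a (j - 1)

lemma sum_range_succ_mul_pow_sub_one (a : ℤ → R) (ha : a (-1) = 0) (θ : R) (m : ℕ) :
    ∑ j ∈ range (m + 1), a ((j : ℤ) - 1) * θ ^ j = θ * ∑ j ∈ range m, a j * θ ^ j := by
  rw [sum_range_succ', mul_sum]
  simp only [Nat.cast_add, Nat.cast_one, add_sub_cancel_right, pow_succ, CharP.cast_eq_zero,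
    zero_sub, ha, pow_zero, mul_one, add_zero]
  exact sum_congr rfl fun _ _ => by ring

lemma sq_mul_pow_succ_eq_sum_detCoeff (n : ℕ) (hn : 1 ≤ n) (a : ℤ → R) (ha : a (-1) = 0)
    (θ : R) (hθ : ∑ i ∈ range (n + 1), a i * θ ^ i = 0) :
    a n ^ 2 * θ ^ (n + 1) = ∑ j ∈ range n, detCoeff a n j * θ ^ j := by
  obtain ⟨m, rfl⟩ : ∃ m, n = m + 1 := ⟨n - 1, by omega⟩
  have hsucc : ∑ j ∈ range (m + 1), a j * θ ^ j = -(a ((m + 1 : ℕ) : ℤ) * θ ^ (m + 1)) := by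
    rw [sum_range_succ] at hθ; linear_combination hθ
  have hm : ∑ j ∈ range m, a j * θ ^ j
      = -(a ((m + 1 : ℕ) : ℤ) * θ ^ (m + 1)) - a m * θ ^ m := by
    rw [sum_range_succ] at hsucc; linear_combination hsucc
  have hsplit : ∑ j ∈ range (m + 1), detCoeff a (m + 1 : ℕ) j * θ ^ j
      = a m * ∑ j ∈ range (m + 1), a j * θ ^ j
        - a ((m + 1 : ℕ) : ℤ) * ∑ j ∈ range (m + 1), a ((j : ℤ) - 1) * θ ^ j := by
    simp only [detCoeff, mul_sum, ← sum_sub_distrib]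
    exact sum_congr rfl fun j _ => by push_cast; ring_nf
  rw [hsplit, hsucc, sum_range_succ_mul_pow_sub_one a ha, hm]
  ring

lemma sum_range_pow_add_two_of_sq_add_eq_one {r : R} (hr : r ^ 2 + r = 1) (n : ℕ) :
    ∑ k ∈ range n, r ^ (k + 2) = 1 - r ^ n := by
  induction n with
  | zero => simp
  | succ n ih => rw [sum_range_succ, ih]; linear_combination r ^ n * hr

end CommRing

lemma le_one_div_mul_of_pow_succ_le_sum {r x M : ℝ} (hr0 : 0 < r) (hr : r ^ 2 + r = 1)
    (hM : 0 ≤ M) {n : ℕ} (h : x ^ (n + 1) ≤ ∑ j ∈ range n, M ^ (n + 1 - j) * x ^ j) :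
    x ≤ 1 / r * M := by
  by_contra! hlt
  have hx : 0 < x := lt_of_le_of_lt (by positivity) hlt
  have hMx : M ≤ r * x := by rw [one_div_mul_eq_div, div_lt_iff₀' hr0] at hlt; exact hlt.le
  have hsum : ∑ j ∈ range n, M ^ (n + 1 - j) * x ^ j ≤ (1 - r ^ n) * x ^ (n + 1) := by
    calc ∑ j ∈ range n, M ^ (n + 1 - j) * x ^ j
        ≤ ∑ j ∈ range n, (r * x) ^ (n + 1 - j) * x ^ j := by gcongr
      _ = ∑ j ∈ range n, r ^ (n - 1 - j + 2) * x ^ (n + 1) := by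
          refine sum_congr rfl fun j hj => ?_
          have hj := mem_range.mp hj
          rw [mul_pow, mul_assoc, ← pow_add, show n + 1 - j + j = n + 1 by omega,
            show n + 1 - j = n - 1 - j + 2 by omega]
      _ = (1 - r ^ n) * x ^ (n + 1) := by
          rw [sum_range_reflect (fun k => r ^ (k + 2) * x ^ (n + 1)), ← sum_mul,
            sum_range_pow_add_two_of_sq_add_eq_one hr]
  have : 0 < r ^ n * x ^ (n + 1) := by positivity
  linarith

lemma le_pow_of_rpow_one_div_le {x M : ℝ} {m : ℕ} (hm : 0 < m) (hx : 0 ≤ x)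
    (h : x ^ (1 / (m : ℝ)) ≤ M) : x ≤ M ^ m := by
  have hM : 0 ≤ M := (Real.rpow_nonneg hx _).trans h
  rw [one_div, Real.rpow_inv_le_iff_of_pos hx hM (by positivity), Real.rpow_natCast] at h
  exact h

lemma norm_pow_succ_le_sum_of_norm_detCoeff_le {𝕜 : Type*} [NormedField 𝕜] (n : ℕ) (hn : 1 ≤ n)
    (a : ℤ → 𝕜) (han : a n ≠ 0) (ha : a (-1) = 0) (θ : 𝕜)
    (hθ : ∑ i ∈ range (n + 1), a i * θ ^ i = 0) {M : ℝ}
    (hM : ∀ j < n, ‖detCoeff a n j‖ ≤ ‖a n‖ ^ 2 * M ^ (n + 1 - j)) :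
    ‖θ‖ ^ (n + 1) ≤ ∑ j ∈ range n, M ^ (n + 1 - j) * ‖θ‖ ^ j := by
  refine le_of_mul_le_mul_left ?_ (by positivity : 0 < ‖a n‖ ^ 2)
  calc ‖a n‖ ^ 2 * ‖θ‖ ^ (n + 1) = ‖∑ j ∈ range n, detCoeff a n j * θ ^ j‖ := by
        rw [← sq_mul_pow_succ_eq_sum_detCoeff n hn a ha θ hθ, norm_mul, norm_pow, norm_pow]
    _ ≤ ∑ j ∈ range n, ‖detCoeff a n j‖ * ‖θ‖ ^ j := by
        simpa only [norm_mul, norm_pow] using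
          norm_sum_le (range n) fun j => detCoeff a n j * θ ^ j
    _ ≤ ∑ j ∈ range n, ‖a n‖ ^ 2 * M ^ (n + 1 - j) * ‖θ‖ ^ j := by
        gcongr with j hj
        exact hM j (mem_range.mp hj)
    _ = ‖a n‖ ^ 2 * ∑ j ∈ range n, M ^ (n + 1 - j) * ‖θ‖ ^ j := by
        simp only [mul_sum, mul_assoc]

lemma sqrt_five_sub_one_div_two_sq_add_self :
    ((Real.sqrt 5 - 1) / 2) ^ 2 + (Real.sqrt 5 - 1) / 2 = 1 := by
  linear_combination Real.sq_sqrt (by norm_num : (0 : ℝ) ≤ 5) / 4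

lemma sqrt_five_sub_one_div_two_pos : 0 < (Real.sqrt 5 - 1) / 2 := by
  have : 1 < Real.sqrt 5 := by
    rw [show (1 : ℝ) = Real.sqrt 1 by simp]
    exact Real.sqrt_lt_sqrt zero_le_one (by norm_num)
  linarith

/-- With coefficients indexed by `ℤ` (and vanishing for negative indices),
every root `θ` of `p(z) = aₙ zⁿ + ⋯ + a₀` (`aₙ ≠ 0`, `n ≥ 1`) satisfies
`|θ| ≤ (1/r₃) · max { |(a_{n-1} a_{n-k+2} - aₙ a_{n-k+1})/aₙ²|^{1/(k-1)} : k = 3, …, n+2 }`,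
where `r₃ = (√5 - 1)/2` is the unique positive root of `t² + t - 1`. -/
theorem root_bound_m_three
    (n : ℕ) (hn : 1 ≤ n) (a : ℤ → ℂ) (han : a n ≠ 0)
    (hneg : ∀ i : ℤ, i < 0 → a i = 0)
    (θ : ℂ) (hθ : (∑ i ∈ Finset.range (n + 1), a (i : ℤ) * θ ^ i) = 0) :
    ‖θ‖ ≤ (1 / ((Real.sqrt 5 - 1) / 2)) *
      (Finset.Icc 3 (n + 2)).sup' (Finset.nonempty_Icc.mpr (by omega))
        (fun k => ‖
          ((a ((n : ℤ) - 1) * a ((n : ℤ) - k + 2) - a n * a ((n : ℤ) - k + 1)) / (a n) ^ 2)‖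
            ^ (1 / ((k : ℝ) - 1))) := by
  set f : ℕ → ℝ := fun k => ‖
    ((a ((n : ℤ) - 1) * a ((n : ℤ) - k + 2) - a n * a ((n : ℤ) - k + 1)) / (a n) ^ 2)‖
      ^ (1 / ((k : ℝ) - 1))
  have hM0 : 0 ≤ (Icc 3 (n + 2)).sup' (nonempty_Icc.mpr (by omega)) f :=
    (Real.rpow_nonneg (norm_nonneg _) _).trans
      (le_sup' f (mem_Icc.mpr ⟨le_rfl, by omega⟩))
  refine le_one_div_mul_of_pow_succ_le_sum sqrt_five_sub_one_div_two_pos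
    sqrt_five_sub_one_div_two_sq_add_self hM0
    (norm_pow_succ_le_sum_of_norm_detCoeff_le n hn a han (hneg _ (by norm_num)) θ hθ
      fun j hj => ?_)
  have hfj := le_sup' f (mem_Icc.mpr (by omega : 3 ≤ n + 2 - j ∧ n + 2 - j ≤ n + 2))
  have hidx : (n : ℤ) - ((n + 2 - j : ℕ) : ℤ) + 2 = j := by omega
  have hidx' : (n : ℤ) - ((n + 2 - j : ℕ) : ℤ) + 1 = j - 1 := by omega
  have hexp : ((n + 2 - j : ℕ) : ℝ) - 1 = ((n + 1 - j : ℕ) : ℝ) := by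
    rw [show n + 2 - j = (n + 1 - j) + 1 by omega]; push_cast; ring
  simp only [f, hidx, hidx', hexp] at hfj
  have hdet := le_pow_of_rpow_one_div_le (by omega) (norm_nonneg _) hfj
  rw [norm_div, norm_pow, div_le_iff₀ (by positivity)] at hdet
  exact hdet.trans_eq (mul_comm _ _)
end

section
/- Let p(z) = aₙzⁿ + ⋯ + a₁z + a₀ be a polynomial with complex coefficients, aₙ ≠ 0, n ≥ 1, and set a₋₁ = a₋₂ = 0. Let r₄ be the unique positive root of t³ + t − 1. Then every root θ of p satisfies |θ| ≤ (1/r₄) · max{ | det M_k / aₙ³ |^{1/(k−1)} : k = 4, …, n+3 }, where M_k is the 3×3 matrix with rows (a_{n−1}, a_{n−2}, a_{n−k+1}), (aₙ, a_{n−1}, a_{n−k+2}), (0, aₙ, a_{n−k+3}). -/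
/-!
Multiplying `p` by `Q(z) = aₙ² z² - aₙ aₙ₋₁ z + (aₙ₋₁² - aₙ aₙ₋₂)` kills the coefficients of
`z^(n+1)` and `z^n`: the product is `aₙ³ z^(n+2) + ∑_{k=4}^{n+3} det M_k z^(n+3-k)`.
If `r₄ |θ|` exceeded the maximum `B` of the quantities `|det M_k / aₙ³|^(1/(k-1))`, the lower
terms at a root `θ` would have absolute values at most `|aₙ|³ |θ|^(n+2) r₄^(k-1)`, which sum to
less than `|aₙ|³ |θ|^(n+2)` because `∑_{j=3}^{n+2} r₄^j = 1 - r₄ⁿ` when `r₄³ = 1 - r₄`.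
-/

open Finset

section

variable {R : Type*}

theorem sum_Ico_pow_eq_one_sub_pow [CommRing R] {r : R} {m : ℕ} (h : r ^ m = 1 - r)
    (l : ℕ) : ∑ j ∈ Ico m (m + l), r ^ j = 1 - r ^ l := by
  induction l with
  | zero => simp
  | succ l ih =>
    rw [← add_assoc, sum_Ico_succ_top (by omega), ih, pow_add, h]
    ring

theorem sum_Icc_pow_pred_lt_one {r : ℝ} (hr : 0 < r) {m : ℕ} (h : r ^ m = 1 - r) (n : ℕ) :
    ∑ k ∈ Icc (m + 1) (n + m), r ^ (k - 1) < 1 := by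
  rw [← Ico_add_one_right_eq_Icc, ← sum_Ico_add']
  simp only [add_tsub_cancel_right]
  rw [add_comm n, sum_Ico_pow_eq_one_sub_pow h]
  linarith [pow_pos hr n]

theorem norm_le_norm_mul_pow_of_norm_div_rpow_le {𝕜 : Type*} [NormedDivisionRing 𝕜] {x y : 𝕜}
    (hy : y ≠ 0) {m : ℕ} (hm : m ≠ 0) {B : ℝ} (h : ‖x / y‖ ^ (m⁻¹ : ℝ) ≤ B) :
    ‖x‖ ≤ ‖y‖ * B ^ m := calc
  ‖x‖ = ‖y‖ * (‖x / y‖ ^ (m⁻¹ : ℝ)) ^ m := by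
    rw [Real.rpow_inv_natCast_pow (norm_nonneg _) hm, norm_div,
      mul_div_cancel₀ _ (norm_ne_zero_iff.mpr hy)]
  _ ≤ ‖y‖ * B ^ m := by gcongr

theorem mul_norm_le_of_mul_pow_add_sum_eq_zero {𝕜 ι : Type*} [NormedDivisionRing 𝕜]
    {A θ : 𝕜} {N : ℕ} {s : Finset ι} {c : ι → 𝕜} {e : ι → ℕ} {r B : ℝ}
    (hθ : A * θ ^ N + ∑ i ∈ s, c i * θ ^ (N - e i) = 0) (hA : A ≠ 0) (he : ∀ i ∈ s, e i ≤ N)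
    (hB : 0 ≤ B) (hc : ∀ i ∈ s, ‖c i‖ ≤ ‖A‖ * B ^ e i) (hr : ∑ i ∈ s, r ^ e i < 1) :
    r * ‖θ‖ ≤ B := by
  by_contra! hlt
  have hθpos : 0 < ‖θ‖ := norm_pos_iff.mpr <| by
    rintro rfl
    rw [norm_zero, mul_zero] at hlt
    exact hlt.not_ge hB
  have hApos : 0 < ‖A‖ * ‖θ‖ ^ N := by positivity
  have hterm (i : ι) (hi : i ∈ s) : ‖c i * θ ^ (N - e i)‖ ≤ ‖A‖ * ‖θ‖ ^ N * r ^ e i := calc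
    ‖c i * θ ^ (N - e i)‖ ≤ ‖A‖ * (r * ‖θ‖) ^ e i * ‖θ‖ ^ (N - e i) := by
      rw [norm_mul, norm_pow]
      gcongr
      exact (hc i hi).trans (by gcongr)
    _ = ‖A‖ * ‖θ‖ ^ N * r ^ e i := by
      rw [← pow_mul_pow_sub ‖θ‖ (he i hi)]
      ring
  refine lt_irrefl (‖A‖ * ‖θ‖ ^ N) ?_
  calc ‖A‖ * ‖θ‖ ^ N = ‖∑ i ∈ s, c i * θ ^ (N - e i)‖ := by
        rw [← norm_pow, ← norm_mul, eq_neg_of_add_eq_zero_left hθ, norm_neg]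
    _ ≤ ∑ i ∈ s, ‖A‖ * ‖θ‖ ^ N * r ^ e i := (norm_sum_le _ _).trans (sum_le_sum hterm)
    _ < ‖A‖ * ‖θ‖ ^ N := by rw [← mul_sum]; exact mul_lt_of_lt_one_right hApos hr

theorem sum_shift_mul_pow_eq_pow_mul_sum [CommSemiring R] {a : ℤ → R}
    (hneg : ∀ i : ℤ, i < 0 → a i = 0) (n s : ℕ) (θ : R) :
    ∑ j ∈ range (s + n), a (j - s) * θ ^ j = θ ^ s * ∑ i ∈ range n, a i * θ ^ i := by
  rw [sum_range_add,
    sum_eq_zero fun j hj => by rw [hneg _ (by rw [mem_range] at hj; omega), zero_mul],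
    zero_add, mul_sum]
  refine sum_congr rfl fun i _ => ?_
  rw [Nat.cast_add, add_sub_cancel_left, pow_add]
  ring

def rootBoundMatrix [Zero R] (a : ℤ → R) (n k : ℕ) : Matrix (Fin 3) (Fin 3) R :=
  !![a ((n : ℤ) - 1), a ((n : ℤ) - 2), a ((n : ℤ) - k + 1);
     a (n : ℤ),       a ((n : ℤ) - 1), a ((n : ℤ) - k + 2);
     0,               a (n : ℤ),       a ((n : ℤ) - k + 3)]

theorem det_rootBoundMatrix [CommRing R] (a : ℤ → R) (n k : ℕ) :
    (rootBoundMatrix a n k).det = a n ^ 2 * a (n - k + 1) - a n * a (n - 1) * a (n - k + 2)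
      + (a (n - 1) ^ 2 - a n * a (n - 2)) * a (n - k + 3) := by
  rw [rootBoundMatrix, Matrix.det_fin_three]
  simp only [Matrix.of_apply, Matrix.cons_val', Matrix.cons_val_zero, Matrix.cons_val_one,
    Matrix.cons_val, Matrix.cons_val_fin_one]
  ring

theorem leading_mul_pow_add_sum_det_eq_zero [CommRing R] {a : ℤ → R}
    (hneg : ∀ i : ℤ, i < 0 → a i = 0) {n : ℕ} {θ : R}
    (hθ : ∑ i ∈ range (n + 1), a i * θ ^ i = 0) :
    a n ^ 3 * θ ^ (n + 2) + ∑ k ∈ Icc 4 (n + 3), (rootBoundMatrix a n k).det * θ ^ (n + 3 - k)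
      = 0 := by
  have htrunc (s : ℕ) : ∑ j ∈ range n, a (j - s) * θ ^ j
      + ∑ i ∈ range (s + 1), a (n + i - s) * θ ^ (n + i) = 0 := by
    have := sum_shift_mul_pow_eq_pow_mul_sum hneg (n + 1) s θ
    rw [hθ, mul_zero, show s + (n + 1) = n + (s + 1) by ring, sum_range_add] at this
    simpa using this
  have h0 := htrunc 0
  have h1 := htrunc 1
  have h2 := htrunc 2
  simp only [sum_range_succ, sum_range_zero, Nat.cast_zero, Nat.cast_one, Nat.cast_ofNat, zero_add,
    add_zero, sub_zero, add_sub_cancel_right, show (n : ℤ) + 1 - 2 = n - 1 by ring] at h0 h1 h2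
  have hreindex : ∑ k ∈ Icc 4 (n + 3), (rootBoundMatrix a n k).det * θ ^ (n + 3 - k)
      = ∑ j ∈ range n, (a n ^ 2 * a (j - 2) - a n * a (n - 1) * a (j - 1)
          + (a (n - 1) ^ 2 - a n * a (n - 2)) * a j) * θ ^ j := by
    refine sum_nbij' (fun k => n + 3 - k) (fun j => n + 3 - j) ?_ ?_ ?_ ?_ ?_
    any_goals intro i hi; simp only [mem_Icc, mem_range] at hi ⊢; omega
    intro k hk
    have hcast : ((n + 3 - k : ℕ) : ℤ) = n - k + 3 := by simp only [mem_Icc] at hk; omega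
    rw [det_rootBoundMatrix, hcast, show (n : ℤ) - k + 3 - 2 = n - k + 1 by ring,
      show (n : ℤ) - k + 3 - 1 = n - k + 2 by ring]
  rw [hreindex]
  simp only [add_mul, sub_mul, sum_add_distrib, sum_sub_distrib, mul_assoc, ← mul_sum]
  linear_combination a n ^ 2 * h2 - a n * a (n - 1) * h1 + (a (n - 1) ^ 2 - a n * a (n - 2)) * h0

end

/-- With coefficients indexed by `ℤ` (and vanishing for negative indices),
let `r₄` be the unique positive root of `t³ + t - 1`. Every root `θ` of
`p(z) = aₙ zⁿ + ⋯ + a₀` (`aₙ ≠ 0`, `n ≥ 1`) satisfies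
`|θ| ≤ (1/r₄) · max { |det M_k / aₙ³|^{1/(k-1)} : k = 4, …, n+3 }`, where `M_k` is the
3×3 matrix with rows `(a_{n-1}, a_{n-2}, a_{n-k+1})`, `(aₙ, a_{n-1}, a_{n-k+2})`,
`(0, aₙ, a_{n-k+3})`. -/
theorem root_bound_m_four
    (n : ℕ) (hn : 1 ≤ n) (a : ℤ → ℂ) (han : a n ≠ 0)
    (hneg : ∀ i : ℤ, i < 0 → a i = 0)
    (r₄ : ℝ) (hr₄pos : 0 < r₄) (hr₄ : r₄ ^ 3 + r₄ - 1 = 0)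
    (θ : ℂ) (hθ : (∑ i ∈ Finset.range (n + 1), a (i : ℤ) * θ ^ i) = 0) :
    ‖θ‖ ≤ (1 / r₄) *
      (Finset.Icc 4 (n + 3)).sup' (Finset.nonempty_Icc.mpr (by omega))
        (fun k => ‖
          ((Matrix.det !![a ((n : ℤ) - 1), a ((n : ℤ) - 2), a ((n : ℤ) - k + 1);
                          a (n : ℤ),       a ((n : ℤ) - 1), a ((n : ℤ) - k + 2);
                          0,               a (n : ℤ),       a ((n : ℤ) - k + 3)]) / (a n) ^ 3)‖
            ^ (1 / ((k : ℝ) - 1))) := by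
  rw [one_div_mul_eq_div, le_div_iff₀' hr₄pos]
  refine mul_norm_le_of_mul_pow_add_sum_eq_zero (N := n + 2) (s := Icc 4 (n + 3))
    (e := fun k => k - 1) (c := fun k => (rootBoundMatrix a n k).det) ?_ (pow_ne_zero 3 han)
    (fun k hk => Nat.sub_le_of_le_add (mem_Icc.mp hk).2)
    (le_sup'_of_le _ (mem_Icc.mpr ⟨le_rfl, by omega⟩) (by positivity)) ?_
    (sum_Icc_pow_pred_lt_one hr₄pos (by linarith) n)
  · rw [← leading_mul_pow_add_sum_det_eq_zero hneg hθ]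
    congr 1
    refine sum_congr rfl fun k hk => ?_
    rw [show n + 2 - (k - 1) = n + 3 - k by simp only [mem_Icc] at hk; omega]
  · intro k hk
    have hk1 : 1 < k := by simp only [mem_Icc] at hk; omega
    have hle := le_sup'
      (fun k : ℕ => ‖(rootBoundMatrix a n k).det / a n ^ 3‖ ^ (1 / ((k : ℝ) - 1))) hk
    rw [one_div, ← Nat.cast_pred (by omega)] at hle
    exact norm_le_norm_mul_pow_of_norm_div_rpow_le (pow_ne_zero 3 han) (by omega) hle
end

section
/- Let k ≥ 2, let B be a k×k real symmetric positive definite matrix, c ∈ ℝ^k, and a ∈ ℝ^k with a ≠ 0. Define B' = (k²/(k²−1))·( B − 2(Ba)(Ba)ᵀ/((k+1)·aᵀBa) ) and c' = c − Ba/((k+1)·√(aᵀBa)). Then the half-ellipsoid E(B,c) ∩ { x ∈ ℝ^k : aᵀ(x − c) ≤ 0 } is contained in the ellipsoid E(B',c'). -/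
/-!
By Sherman–Morrison, `B'⁻¹ = (k² - 1)/k² • (B⁻¹ + 2/((k - 1) aᵀBa) • aaᵀ)`. With `y = x - c`,
`q = yᵀB⁻¹y` and `u = aᵀy / √(aᵀBa)`, the quadratic form of `B'⁻¹` at `x - c'` then equals
`1 + (k² - 1)/k² (q - 1) + 2(k + 1)/k² u(u + 1)`, which is at most `1` because `q ≤ 1` and,
by Cauchy–Schwarz, `-1 ≤ -√q ≤ u ≤ 0`.
-/

open Matrix

namespace Matrix

variable {n 𝕜 : Type*} [Fintype n] [DecidableEq n] [Field 𝕜]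

theorem inv_smul_of_ne_zero {k : 𝕜} (hk : k ≠ 0) (A : Matrix n n 𝕜) :
    (k • A)⁻¹ = k⁻¹ • A⁻¹ := by
  by_cases hA : IsUnit A.det
  · exact inv_smul' A (Units.mk0 k hk) hA
  · have hkA : ¬IsUnit (k • A).det := by
      rw [det_smul, IsUnit.mul_iff, not_and_or]
      exact Or.inr hA
    rw [nonsing_inv_apply_not_isUnit _ hA, nonsing_inv_apply_not_isUnit _ hkA, smul_zero]

/-- The shape matrix `B'` of the ellipsoid-method update in dimension `K`. -/
def ellipsoidUpdate (K : 𝕜) (B : Matrix n n 𝕜) (a : n → 𝕜) : Matrix n n 𝕜 :=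
  (K ^ 2 / (K ^ 2 - 1)) • (B - (2 / ((K + 1) * (a ⬝ᵥ B *ᵥ a))) • vecMulVec (B *ᵥ a) (B *ᵥ a))

omit [DecidableEq n] in
theorem dotProduct_add_smul_vecMulVec_mulVec (A : Matrix n n 𝕜) (u v : n → 𝕜) (ρ : 𝕜) :
    v ⬝ᵥ (A + ρ • vecMulVec u u) *ᵥ v = v ⬝ᵥ A *ᵥ v + ρ * (u ⬝ᵥ v) ^ 2 := by
  rw [add_mulVec, smul_mulVec, vecMulVec_mulVec, dotProduct_add, dotProduct_smul,
    dotProduct_smul, dotProduct_comm v u]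
  simp only [MulOpposite.smul_eq_mul_unop, MulOpposite.unop_op, smul_eq_mul]
  ring

namespace IsSymm

variable {B : Matrix n n 𝕜}

theorem mulVec_vecMul_inv (hBs : B.IsSymm) (hB : IsUnit B.det) (a : n → 𝕜) :
    (B *ᵥ a) ᵥ* B⁻¹ = a := by
  rw [← vecMul_transpose, hBs.eq, vecMul_vecMul, mul_nonsing_inv _ hB, vecMul_one]

theorem inv_sub_smul_vecMulVec_mulVec (hBs : B.IsSymm) (hB : IsUnit B.det) (a : n → 𝕜)
    {τ : 𝕜} (hτ : τ * (a ⬝ᵥ B *ᵥ a) ≠ 1) :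
    (B - τ • vecMulVec (B *ᵥ a) (B *ᵥ a))⁻¹ =
      B⁻¹ + (τ / (1 - τ * (a ⬝ᵥ B *ᵥ a))) • vecMulVec a a := by
  set ρ := τ / (1 - τ * (a ⬝ᵥ B *ᵥ a)) with hρ
  have hρτ : ρ - τ - τ * (ρ * (a ⬝ᵥ B *ᵥ a)) = 0 := by
    rw [hρ]
    field_simp [sub_ne_zero.mpr hτ.symm]
    ring
  apply inv_eq_right_inv
  rw [sub_mul, mul_add, mul_add, mul_nonsing_inv _ hB, Matrix.smul_mul, Matrix.smul_mul,
    Matrix.mul_smul, Matrix.mul_smul,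
    mul_vecMulVec, vecMulVec_mul, mulVec_vecMul_inv hBs hB, vecMulVec_mul_vecMulVec,
    dotProduct_comm (B *ᵥ a) a, vecMulVec_smul]
  calc (1 : Matrix n n 𝕜) + ρ • vecMulVec (B *ᵥ a) a
        - (τ • vecMulVec (B *ᵥ a) a + τ • ρ • (a ⬝ᵥ B *ᵥ a) • vecMulVec (B *ᵥ a) a)
      = 1 + (ρ - τ - τ * (ρ * (a ⬝ᵥ B *ᵥ a))) • vecMulVec (B *ᵥ a) a := by module
    _ = 1 := by rw [hρτ, zero_smul, add_zero]

theorem dotProduct_inv_mulVec_add_smul_mulVec (hBs : B.IsSymm) (hB : IsUnit B.det)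
    (a y : n → 𝕜) (β : 𝕜) :
    (y + β • B *ᵥ a) ⬝ᵥ B⁻¹ *ᵥ (y + β • B *ᵥ a) =
      y ⬝ᵥ B⁻¹ *ᵥ y + 2 * β * (a ⬝ᵥ y) + β ^ 2 * (a ⬝ᵥ B *ᵥ a) := by
  have hinv : B⁻¹ *ᵥ (B *ᵥ a) = a := by
    rw [mulVec_mulVec, nonsing_inv_mul _ hB, one_mulVec]
  rw [mulVec_add, mulVec_smul, hinv, dotProduct_add, add_dotProduct, add_dotProduct,
    smul_dotProduct, smul_dotProduct, dotProduct_smul, dotProduct_smul,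
    dotProduct_mulVec (B *ᵥ a), mulVec_vecMul_inv hBs hB, dotProduct_comm (B *ᵥ a) a,
    dotProduct_comm y a]
  simp only [smul_eq_mul]
  ring

theorem inv_ellipsoidUpdate (hBs : B.IsSymm) (hB : IsUnit B.det) (a : n → 𝕜) {K : 𝕜}
    (hK : K ≠ 0) (hKm : K - 1 ≠ 0) (hKp : K + 1 ≠ 0) (hs : a ⬝ᵥ B *ᵥ a ≠ 0) :
    (ellipsoidUpdate K B a)⁻¹ =
      ((K ^ 2 - 1) / K ^ 2) • (B⁻¹ + (2 / ((K - 1) * (a ⬝ᵥ B *ᵥ a))) • vecMulVec a a) := by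
  have hτ : 2 / ((K + 1) * (a ⬝ᵥ B *ᵥ a)) * (a ⬝ᵥ B *ᵥ a) = 2 / (K + 1) := by
    rw [div_mul_eq_mul_div, mul_div_mul_right _ _ hs]
  have hτ1 : 2 / (K + 1) ≠ 1 := by
    rw [ne_eq, div_eq_one_iff_eq hKp]
    exact fun h => hKm (by linear_combination -h)
  have hρ : 2 / ((K + 1) * (a ⬝ᵥ B *ᵥ a)) / (1 - 2 / (K + 1)) =
      2 / ((K - 1) * (a ⬝ᵥ B *ᵥ a)) := by
    rw [one_sub_div hKp, show K + 1 - 2 = K - 1 by ring]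
    field_simp
  have hσ : K ^ 2 / (K ^ 2 - 1) ≠ 0 := by
    rw [show K ^ 2 - 1 = (K - 1) * (K + 1) by ring]
    exact div_ne_zero (pow_ne_zero 2 hK) (mul_ne_zero hKm hKp)
  rw [ellipsoidUpdate, inv_smul_of_ne_zero hσ, inv_div,
    hBs.inv_sub_smul_vecMulVec_mulVec hB a (by rwa [hτ]), hτ, hρ]

end IsSymm

theorem PosDef.dotProduct_sq_le {B : Matrix n n ℝ} (hB : B.PosDef) (a y : n → ℝ) :
    (a ⬝ᵥ y) ^ 2 ≤ (a ⬝ᵥ B *ᵥ a) * (y ⬝ᵥ B⁻¹ *ᵥ y) := by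
  have hBs : B.IsSymm := isHermitian_iff_isSymm.mp hB.isHermitian
  have hdet : IsUnit B.det := isUnit_iff_ne_zero.mpr hB.det_pos.ne'
  have hquad (β : ℝ) : 0 ≤ (a ⬝ᵥ B *ᵥ a) * (β * β) + 2 * (a ⬝ᵥ y) * β + y ⬝ᵥ B⁻¹ *ᵥ y := by
    have := hB.inv.posSemidef.dotProduct_mulVec_nonneg (y + β • B *ᵥ a)
    rw [star_trivial, hBs.dotProduct_inv_mulVec_add_smul_mulVec hdet] at this
    linarith
  have := discrim_le_zero hquad
  rw [discrim] at this
  linarith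

end Matrix

theorem ellipsoid_update_bound {K q u : ℝ} (hK : 1 < K) (hq : q ≤ 1) (hu : u ≤ 0)
    (hu2 : u ^ 2 ≤ q) :
    (K ^ 2 - 1) / K ^ 2 * (q + 2 * u / (K + 1) + 1 / (K + 1) ^ 2
      + 2 / (K - 1) * (u + 1 / (K + 1)) ^ 2) ≤ 1 := by
  have hK0 : 0 < K := by linarith
  have hK1 : 0 < K - 1 := by linarith
  have hK2 : 0 < K ^ 2 - 1 := by nlinarith
  have hu1 : -1 ≤ u := by nlinarith
  have key : (K ^ 2 - 1) / K ^ 2 * (q + 2 * u / (K + 1) + 1 / (K + 1) ^ 2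
      + 2 / (K - 1) * (u + 1 / (K + 1)) ^ 2)
        = 1 + (K ^ 2 - 1) / K ^ 2 * (q - 1) + 2 * (K + 1) / K ^ 2 * (u * (u + 1)) := by
    field_simp
    ring
  have h1 : (K ^ 2 - 1) / K ^ 2 * (q - 1) ≤ 0 :=
    mul_nonpos_of_nonneg_of_nonpos (by positivity) (by linarith)
  have h2 : 2 * (K + 1) / K ^ 2 * (u * (u + 1)) ≤ 0 :=
    mul_nonpos_of_nonneg_of_nonpos (by positivity)
      (mul_nonpos_of_nonpos_of_nonneg hu (by linarith))
  linarith

/-- The ellipsoid-method update: the half-ellipsoid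
`E(B,c) ∩ {x : aᵀ(x-c) ≤ 0}` is contained in the updated ellipsoid `E(B',c')`. -/
theorem half_ellipsoid_subset_updated_ellipsoid
    (k : ℕ) (hk : 2 ≤ k)
    (B : Matrix (Fin k) (Fin k) ℝ) (hB : B.PosDef)
    (c a : Fin k → ℝ) (ha : a ≠ 0)
    (B' : Matrix (Fin k) (Fin k) ℝ)
    (hB' : B' = ((k : ℝ) ^ 2 / ((k : ℝ) ^ 2 - 1)) •
      (B - (2 / (((k : ℝ) + 1) * (a ⬝ᵥ B.mulVec a))) • vecMulVec (B.mulVec a) (B.mulVec a)))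
    (c' : Fin k → ℝ)
    (hc' : c' = c - (((k : ℝ) + 1) * Real.sqrt (a ⬝ᵥ B.mulVec a))⁻¹ • B.mulVec a) :
    ∀ x : Fin k → ℝ,
      (x - c) ⬝ᵥ B⁻¹.mulVec (x - c) ≤ 1 → a ⬝ᵥ (x - c) ≤ 0 →
      (x - c') ⬝ᵥ B'⁻¹.mulVec (x - c') ≤ 1 := by
  intro x hx hax
  have hK : (1 : ℝ) < k := by exact_mod_cast hk
  have hBs : B.IsSymm := isHermitian_iff_isSymm.mp hB.isHermitian
  have hdet : IsUnit B.det := isUnit_iff_ne_zero.mpr hB.det_pos.ne'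
  have hs : 0 < a ⬝ᵥ B *ᵥ a := by simpa using hB.dotProduct_mulVec_pos ha
  have hxc' : x - c' = (x - c) + ((k + 1) * √(a ⬝ᵥ B *ᵥ a))⁻¹ • B *ᵥ a := by
    rw [hc']
    abel
  rw [hxc', show B' = ellipsoidUpdate (k : ℝ) B a from hB',
    hBs.inv_ellipsoidUpdate hdet a (by positivity) (by linarith) (by positivity) hs.ne',
    smul_mulVec, dotProduct_smul, dotProduct_add_smul_vecMulVec_mulVec,
    hBs.dotProduct_inv_mulVec_add_smul_mulVec hdet, dotProduct_add, dotProduct_smul]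
  simp only [smul_eq_mul]
  have hcs := hB.dotProduct_sq_le a (x - c)
  have hr : 0 < √(a ⬝ᵥ B *ᵥ a) := Real.sqrt_pos.mpr hs
  have hrs := Real.sq_sqrt hs.le
  set s := a ⬝ᵥ B *ᵥ a
  set r := √s
  set q := (x - c) ⬝ᵥ B⁻¹ *ᵥ (x - c)
  set t := a ⬝ᵥ (x - c)
  clear_value s r q t
  calc
    _ = ((k : ℝ) ^ 2 - 1) / (k : ℝ) ^ 2 * (q + 2 * (t / r) / (k + 1) + 1 / (k + 1) ^ 2
          + 2 / (k - 1) * (t / r + 1 / (k + 1)) ^ 2) := by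
      rw [← hrs]
      field_simp
    _ ≤ 1 := ellipsoid_update_bound hK hx (div_nonpos_of_nonpos_of_nonneg hax hr.le)
      (by rw [div_pow, hrs, div_le_iff₀ hs]; linarith)
end

section
/- Let k ≥ 2, let B be a k×k real symmetric positive definite matrix and a ∈ ℝ^k with a ≠ 0. Then the matrix B' = (k²/(k²−1))·( B − 2(Ba)(Ba)ᵀ/((k+1)·aᵀBa) ) is symmetric positive definite. -/
/-!
By Cauchy–Schwarz for the form `xᵀBy`, `(xᵀBa)² ≤ (xᵀBx)(aᵀBa)`, so the quadratic form of
`B - t (Ba)(Ba)ᵀ / aᵀBa` at `x ≠ 0` is at least `min 1 (1 - t) · xᵀBx > 0` whenever `t < 1`.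
The ellipsoid update is the case `t = 2/(k+1)`, scaled by `k²/(k²-1) > 0`.
-/

open Matrix

namespace Matrix

variable {n R : Type*} [Fintype n]

theorem dotProduct_vecMulVec_self_mulVec [CommSemiring R] (u x : n → R) :
    x ⬝ᵥ (vecMulVec u u *ᵥ x) = (x ⬝ᵥ u) ^ 2 := by
  rw [vecMulVec_mulVec, op_smul_eq_smul, dotProduct_smul, smul_eq_mul, dotProduct_comm u, sq]

theorem IsSymm.dotProduct_mulVec_comm [CommSemiring R] {M : Matrix n n R} (hM : M.IsSymm)
    (x y : n → R) : x ⬝ᵥ (M *ᵥ y) = y ⬝ᵥ (M *ᵥ x) := by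
  rw [dotProduct_mulVec, ← mulVec_transpose, hM.eq, dotProduct_comm]

theorem PosSemidef.dotProduct_mulVec_sq_le [CommRing R] [LinearOrder R] [IsStrictOrderedRing R]
    [StarRing R] [TrivialStar R] {M : Matrix n n R} (hM : M.PosSemidef) (x y : n → R) :
    (x ⬝ᵥ (M *ᵥ y)) ^ 2 ≤ (x ⬝ᵥ (M *ᵥ x)) * (y ⬝ᵥ (M *ᵥ y)) := by
  classical
  have hNonneg (z : n → R) : 0 ≤ toLinearMap₂' R M z z := by
    simpa [toLinearMap₂'_apply'] using hM.dotProduct_mulVec_nonneg z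
  have cauchySchwarz :=
    LinearMap.BilinForm.apply_mul_apply_le_of_forall_zero_le (toLinearMap₂' R M) hNonneg x y
  simp only [toLinearMap₂'_apply'] at cauchySchwarz
  rwa [(isHermitian_iff_isSymm.mp hM.isHermitian).dotProduct_mulVec_comm y x, ← sq]
    at cauchySchwarz

theorem PosDef.sub_smul_vecMulVec_mulVec [Field R] [LinearOrder R] [IsStrictOrderedRing R]
    [StarRing R] [TrivialStar R] {M : Matrix n n R} (hM : M.PosDef) (a : n → R) {t : R}
    (ht : t < 1) :
    (M - (t / (a ⬝ᵥ (M *ᵥ a))) • vecMulVec (M *ᵥ a) (M *ᵥ a)).PosDef := by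
  have hRankOne : ((t / (a ⬝ᵥ (M *ᵥ a))) • vecMulVec (M *ᵥ a) (M *ᵥ a)).IsHermitian :=
    isHermitian_iff_isSymm.mpr (IsSymm.smul (transpose_vecMulVec _ _) _)
  refine .of_dotProduct_mulVec_pos (hM.isHermitian.sub hRankOne) fun x hx => ?_
  have hq : 0 ≤ a ⬝ᵥ (M *ᵥ a) := by simpa using hM.posSemidef.dotProduct_mulVec_nonneg a
  have hp : 0 < x ⬝ᵥ (M *ᵥ x) := by simpa using hM.dotProduct_mulVec_pos hx
  have hr : (x ⬝ᵥ (M *ᵥ a)) ^ 2 / (a ⬝ᵥ (M *ᵥ a)) ≤ x ⬝ᵥ (M *ᵥ x) :=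
    div_le_of_le_mul₀ hq hp.le (hM.posSemidef.dotProduct_mulVec_sq_le x a)
  have hr0 : 0 ≤ (x ⬝ᵥ (M *ᵥ a)) ^ 2 / (a ⬝ᵥ (M *ᵥ a)) := by positivity
  rw [star_trivial, sub_mulVec, dotProduct_sub, smul_mulVec, dotProduct_smul,
    dotProduct_vecMulVec_self_mulVec, smul_eq_mul, div_mul_eq_mul_div, mul_div_assoc]
  rcases le_or_gt t 0 with h | h <;> nlinarith

end Matrix

theorem updated_ellipsoid_matrix_posDef_general
    (k : ℕ) (hk : 2 ≤ k)
    (B : Matrix (Fin k) (Fin k) ℝ) (hB : B.PosDef)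
    (a : Fin k → ℝ) :
    (((k : ℝ) ^ 2 / ((k : ℝ) ^ 2 - 1)) •
      (B - (2 / (((k : ℝ) + 1) * (a ⬝ᵥ B.mulVec a))) •
        vecMulVec (B.mulVec a) (B.mulVec a))).PosDef := by
  have hk2 : (2 : ℝ) ≤ k := mod_cast hk
  have hScale : 0 < (k : ℝ) ^ 2 / ((k : ℝ) ^ 2 - 1) := div_pos (by positivity) (by nlinarith)
  have hStep : 2 / ((k : ℝ) + 1) < 1 := (div_lt_one (by positivity)).mpr (by linarith)
  rw [← div_div]
  exact (hB.sub_smul_vecMulVec_mulVec a hStep).smul hScale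

/-- The updated matrix of the ellipsoid method,
`B' = (k²/(k²-1))·(B - 2(Ba)(Ba)ᵀ/((k+1)·aᵀBa))`, is symmetric positive definite. -/
theorem updated_ellipsoid_matrix_posDef
    (k : ℕ) (hk : 2 ≤ k)
    (B : Matrix (Fin k) (Fin k) ℝ) (hB : B.PosDef)
    (a : Fin k → ℝ) (ha : a ≠ 0) :
    (((k : ℝ) ^ 2 / ((k : ℝ) ^ 2 - 1)) •
      (B - (2 / (((k : ℝ) + 1) * (a ⬝ᵥ B.mulVec a))) •
        vecMulVec (B.mulVec a) (B.mulVec a))).PosDef :=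
  updated_ellipsoid_matrix_posDef_general k hk B hB a
end

section
/- Let k ≥ 2, let B be a k×k real symmetric positive definite matrix, c ∈ ℝ^k, and a ∈ ℝ^k with a ≠ 0. Define B' = (k²/(k²−1))·( B − 2(Ba)(Ba)ᵀ/((k+1)·aᵀBa) ) and c' = c − Ba/((k+1)·√(aᵀBa)). Then the Lebesgue volume of the ellipsoid E(B',c') is at most exp(−1/(2(k+1))) times the Lebesgue volume of E(B,c). -/
/-!
Writing `B⁻¹ = Tᵀ T`, the ellipsoid `E(B, c)` is the preimage of the unit ball under the affine map
`x ↦ T (x - c)`, so its volume is `√(det B)` times that of the unit ball. With `u = B a`, the new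
matrix is `B' = λ (B - t u uᵀ)` where `λ = k² / (k² - 1)` and `t (aᵀ B a) = 2 / (k + 1) < 1`;
Cauchy–Schwarz for the form of `B` shows `B'` is positive definite, and the matrix determinant lemma
gives `det B' = λ ^ k (1 - 2 / (k + 1)) det B`. Finally `1 + x ≤ exp x` bounds this factor by
`exp (-1 / (k + 1))`, and taking square roots gives the claim.
-/

open Matrix MeasureTheory

namespace Matrix

variable {ι : Type*} [Fintype ι]

theorem dotProduct_transpose_mul_self_mulVec {R : Type*} [CommSemiring R] (T : Matrix ι ι R)
    (v w : ι → R) : v ⬝ᵥ (Tᵀ * T) *ᵥ w = (T *ᵥ v) ⬝ᵥ (T *ᵥ w) := by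
  rw [← mulVec_mulVec, dotProduct_mulVec, vecMul_transpose]

theorem PosSemidef.exists_eq_transpose_mul_self {B : Matrix ι ι ℝ} (hB : B.PosSemidef) :
    ∃ T : Matrix ι ι ℝ, B = Tᵀ * T := by
  classical
  open scoped MatrixOrder in
  obtain ⟨T, hT⟩ := CStarAlgebra.nonneg_iff_eq_star_mul_self.mp hB.nonneg
  exact ⟨T, by rw [hT, star_eq_conjTranspose, conjTranspose_eq_transpose_of_trivial]⟩

theorem PosSemidef.dotProduct_mulVec_sq_le_s7 {B : Matrix ι ι ℝ} (hB : B.PosSemidef) (v w : ι → ℝ) :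
    (v ⬝ᵥ B *ᵥ w) ^ 2 ≤ (v ⬝ᵥ B *ᵥ v) * (w ⬝ᵥ B *ᵥ w) := by
  obtain ⟨T, rfl⟩ := hB.exists_eq_transpose_mul_self
  simp only [dotProduct_transpose_mul_self_mulVec]
  simpa only [dotProduct, pow_two] using
    Finset.sum_mul_sq_le_sq_mul_sq Finset.univ (T *ᵥ v) (T *ᵥ w)

theorem det_sub_smul_vecMulVec_mulVec {R : Type*} [CommRing R] [DecidableEq ι]
    (B : Matrix ι ι R) (t : R) (a : ι → R) :
    (B - t • vecMulVec (B *ᵥ a) (B *ᵥ a)).det = (1 - t * (a ⬝ᵥ B *ᵥ a)) * B.det := by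
  have hfactor : B - t • vecMulVec (B *ᵥ a) (B *ᵥ a) =
      B * (1 + replicateCol Unit (-t • a) * replicateRow Unit (B *ᵥ a)) := by
    rw [← vecMulVec_eq, Matrix.mul_add, Matrix.mul_one, mul_vecMulVec, mulVec_smul,
      ← smul_vecMulVec, neg_smul, neg_vecMulVec, sub_eq_add_neg]
  rw [hfactor, det_mul, det_one_add_replicateCol_mul_replicateRow, dotProduct_smul,
    dotProduct_comm, smul_eq_mul]
  ring

theorem PosDef.sub_smul_vecMulVec_mulVec_s7 {B : Matrix ι ι ℝ} (hB : B.PosDef) {t : ℝ} (a : ι → ℝ)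
    (ht : t * (a ⬝ᵥ B *ᵥ a) < 1) : (B - t • vecMulVec (B *ᵥ a) (B *ᵥ a)).PosDef := by
  refine posDef_iff_dotProduct_mulVec.mpr ⟨?_, fun x hx => ?_⟩
  · exact hB.1.sub
      (by simpa using (posSemidef_vecMulVec_self_star (B *ᵥ a)).1.smul (IsSelfAdjoint.all t))
  have hxBx : 0 < x ⬝ᵥ B *ᵥ x := by simpa using hB.dotProduct_mulVec_pos hx
  have haBa : 0 ≤ a ⬝ᵥ B *ᵥ a := by simpa using hB.posSemidef.dotProduct_mulVec_nonneg a
  have hCS := hB.posSemidef.dotProduct_mulVec_sq_le_s7 x a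
  have hform : star x ⬝ᵥ (B - t • vecMulVec (B *ᵥ a) (B *ᵥ a)) *ᵥ x =
      x ⬝ᵥ B *ᵥ x - t * (x ⬝ᵥ B *ᵥ a) ^ 2 := by
    simp only [star_trivial, sub_mulVec, smul_mulVec, vecMulVec_mulVec, op_smul_eq_mul,
      dotProduct_sub, dotProduct_smul, smul_eq_mul]
    rw [dotProduct_comm x (B *ᵥ a)]
    ring
  rw [hform]
  rcases le_or_gt t 0 with h | h <;> nlinarith

variable [DecidableEq ι]

def ellipsoid (B : Matrix ι ι ℝ) (c : ι → ℝ) : Set (ι → ℝ) :=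
  {x | (x - c) ⬝ᵥ B⁻¹ *ᵥ (x - c) ≤ 1}

theorem volume_ellipsoid {B : Matrix ι ι ℝ} (hB : B.PosDef) (c : ι → ℝ) :
    volume (ellipsoid B c) = ENNReal.ofReal √B.det * volume {x : ι → ℝ | x ⬝ᵥ x ≤ 1} := by
  obtain ⟨T, hT⟩ := hB.inv.posSemidef.exists_eq_transpose_mul_self
  have hdetT : T.det ^ 2 = B.det⁻¹ := by
    rw [← Ring.inverse_eq_inv', ← det_nonsing_inv, hT, det_mul, det_transpose, sq]
  have hT0 : LinearMap.det (toLin' T) ≠ 0 := by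
    rw [LinearMap.det_toLin']
    exact ne_zero_pow two_ne_zero (hdetT ▸ inv_ne_zero hB.det_pos.ne')
  have hpreimage : ellipsoid B c = (· + -c) ⁻¹' (toLin' T ⁻¹' {y | y ⬝ᵥ y ≤ 1}) := by
    ext x
    simp only [ellipsoid, hT, dotProduct_transpose_mul_self_mulVec, sub_eq_add_neg,
      Set.mem_ofPred_eq, Set.mem_preimage, toLin'_apply]
  rw [hpreimage, measure_preimage_add_right, Measure.addHaar_preimage_linearMap _ hT0,
    LinearMap.det_toLin', ← Real.sqrt_sq_eq_abs, inv_pow, hdetT, inv_inv]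

end Matrix

theorem sq_div_sq_sub_one_pow_mul_le_exp {k : ℕ} (hk : 2 ≤ k) :
    ((k : ℝ) ^ 2 / ((k : ℝ) ^ 2 - 1)) ^ k * (1 - 2 / ((k : ℝ) + 1)) ≤
      Real.exp (-1 / ((k : ℝ) + 1)) := by
  obtain ⟨n, rfl⟩ : ∃ n, k = n + 1 := ⟨k - 1, by omega⟩
  have hn : (1 : ℝ) ≤ n := by exact_mod_cast (by omega : 1 ≤ n)
  have hden : 0 < ((n : ℝ) + 1) ^ 2 - 1 := by nlinarith
  have hratio_nonneg : 0 ≤ (n + 1 : ℝ) ^ 2 / ((n + 1) ^ 2 - 1) :=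
    div_nonneg (by positivity) hden.le
  push_cast
  have hratio : (n + 1 : ℝ) ^ 2 / ((n + 1) ^ 2 - 1) ≤ Real.exp (1 / ((n + 1) ^ 2 - 1)) := by
    refine le_trans (le_of_eq ?_) (Real.add_one_le_exp _)
    field_simp
    ring
  have hfrac : (n + 1 : ℝ) / (n + 1 + 1) ≤ Real.exp (-1 / (n + 1 + 1)) := by
    refine le_trans (le_of_eq ?_) (Real.add_one_le_exp _)
    field_simp
    ring
  calc ((n + 1 : ℝ) ^ 2 / ((n + 1) ^ 2 - 1)) ^ (n + 1) * (1 - 2 / (n + 1 + 1))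
      = ((n + 1 : ℝ) ^ 2 / ((n + 1) ^ 2 - 1)) ^ n * ((n + 1) / (n + 1 + 1)) ^ 2 := by
        rw [pow_succ, mul_assoc]
        congr 1
        field_simp
        ring
    _ ≤ Real.exp (1 / ((n + 1) ^ 2 - 1)) ^ n * Real.exp (-1 / (n + 1 + 1)) ^ 2 := by
        gcongr
    _ = Real.exp (-1 / (n + 1 + 1)) := by
        rw [← Real.exp_nat_mul, ← Real.exp_nat_mul, ← Real.exp_add]
        congr 1
        push_cast
        field_simp
        ring

theorem updated_ellipsoid_volume_ratio_general
    (k : ℕ) (hk : 2 ≤ k)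
    (B : Matrix (Fin k) (Fin k) ℝ) (hB : B.PosDef)
    (c a : Fin k → ℝ) (ha : a ≠ 0)
    (B' : Matrix (Fin k) (Fin k) ℝ)
    (hB' : B' = ((k : ℝ) ^ 2 / ((k : ℝ) ^ 2 - 1)) •
      (B - (2 / (((k : ℝ) + 1) * (a ⬝ᵥ B.mulVec a))) • vecMulVec (B.mulVec a) (B.mulVec a)))
    (c' : Fin k → ℝ) :
    volume {x : Fin k → ℝ | (x - c') ⬝ᵥ B'⁻¹.mulVec (x - c') ≤ 1} ≤
      ENNReal.ofReal (Real.exp (-1 / (2 * ((k : ℝ) + 1)))) *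
        volume {x : Fin k → ℝ | (x - c) ⬝ᵥ B⁻¹.mulVec (x - c) ≤ 1} := by
  have hK : (2 : ℝ) ≤ k := by exact_mod_cast hk
  have hα : 0 < a ⬝ᵥ B *ᵥ a := by simpa using hB.dotProduct_mulVec_pos ha
  have ht : 2 / ((k + 1) * (a ⬝ᵥ B *ᵥ a)) * (a ⬝ᵥ B *ᵥ a) = 2 / (k + 1) := by field_simp
  have hB'pos : B'.PosDef := by
    have : (0 : ℝ) < k ^ 2 - 1 := by nlinarith
    rw [hB']
    refine (hB.sub_smul_vecMulVec_mulVec_s7 a ?_).smul (by positivity)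
    rw [ht, div_lt_one (by positivity)]
    linarith
  have hdet : B'.det = ((k : ℝ) ^ 2 / ((k : ℝ) ^ 2 - 1)) ^ k * (1 - 2 / ((k : ℝ) + 1)) * B.det := by
    rw [hB', det_smul, det_sub_smul_vecMulVec_mulVec, ht, Fintype.card_fin, mul_assoc]
  change volume (ellipsoid B' c') ≤ _ * volume (ellipsoid B c)
  rw [volume_ellipsoid hB'pos, volume_ellipsoid hB, ← mul_assoc,
    ← ENNReal.ofReal_mul (Real.exp_pos _).le]
  gcongr
  rw [hdet, Real.sqrt_le_left (by positivity), mul_pow, Real.sq_sqrt hB.det_pos.le,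
    ← Real.exp_nat_mul]
  refine mul_le_mul_of_nonneg_right ((sq_div_sq_sub_one_pow_mul_le_exp hk).trans_eq ?_)
    hB.det_pos.le
  congr 1
  push_cast
  field_simp

/-- The volume of the updated ellipsoid `E(B',c')` of the ellipsoid method
is at most `exp(-1/(2(k+1)))` times the volume of `E(B,c)`. -/
theorem updated_ellipsoid_volume_ratio
    (k : ℕ) (hk : 2 ≤ k)
    (B : Matrix (Fin k) (Fin k) ℝ) (hB : B.PosDef)
    (c a : Fin k → ℝ) (ha : a ≠ 0)
    (B' : Matrix (Fin k) (Fin k) ℝ)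
    (hB' : B' = ((k : ℝ) ^ 2 / ((k : ℝ) ^ 2 - 1)) •
      (B - (2 / (((k : ℝ) + 1) * (a ⬝ᵥ B.mulVec a))) • vecMulVec (B.mulVec a) (B.mulVec a)))
    (c' : Fin k → ℝ)
    (hc' : c' = c - (((k : ℝ) + 1) * Real.sqrt (a ⬝ᵥ B.mulVec a))⁻¹ • B.mulVec a) :
    volume {x : Fin k → ℝ | (x - c') ⬝ᵥ B'⁻¹.mulVec (x - c') ≤ 1} ≤
      ENNReal.ofReal (Real.exp (-1 / (2 * ((k : ℝ) + 1)))) *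
        volume {x : Fin k → ℝ | (x - c) ⬝ᵥ B⁻¹.mulVec (x - c) ≤ 1} :=
  updated_ellipsoid_volume_ratio_general k hk B hB c a ha B' hB' c'
end

section
/- Let p(z) = (z − α)(z − β) with α, β ∈ ℂ, α ≠ β, and let N(z) = z − p(z)/p'(z) denote the Newton iteration map of p. If z₀ ∈ ℂ satisfies |z₀ − α| < |z₀ − β|, then the Newton orbit z_{k+1} = N(z_k) is well-defined for all k (p'(z_k) ≠ 0 for every k) and converges to α. In other words, the basin of attraction of α under Newton's method contains the open Voronoi region { z : |z − α| < |z − β| } of α. -/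
/-!
Newton's method for `(z - α)(z - β)` is conjugate to squaring by the Möbius map
`w ↦ (w - α) / (w - β)`, which sends `α` to `0`, `β` to `∞` and the Voronoi region of `α` onto
the open unit disc. Hence the conjugated orbit is `q ^ 2 ^ k` with `‖q‖ < 1`, which tends to `0`,
and the orbit itself tends to `α`.
-/

open Filter Topology Polynomial

section Algebra

variable {K : Type*} [Field K]

def newtonQuadratic (α β w : K) : K :=
  w - (w - α) * (w - β) / ((w - α) + (w - β))

theorem newtonQuadratic_comm (α β w : K) : newtonQuadratic α β w = newtonQuadratic β α w := by
  rw [newtonQuadratic, newtonQuadratic, mul_comm, add_comm]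

theorem newtonQuadratic_sub_left {α β w : K} (h : (w - α) + (w - β) ≠ 0) :
    newtonQuadratic α β w - α = (w - α) ^ 2 / ((w - α) + (w - β)) := by
  rw [newtonQuadratic, eq_div_iff h, sub_right_comm, sub_mul, div_mul_cancel₀ _ h]
  ring

theorem newtonQuadratic_sub_right {α β w : K} (h : (w - α) + (w - β) ≠ 0) :
    newtonQuadratic α β w - β = (w - β) ^ 2 / ((w - α) + (w - β)) := by
  rw [newtonQuadratic_comm, newtonQuadratic_sub_left (by rwa [add_comm]), add_comm]

theorem newtonQuadratic_cayley {α β w : K} (h : (w - α) + (w - β) ≠ 0) :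
    (newtonQuadratic α β w - α) / (newtonQuadratic α β w - β) = ((w - α) / (w - β)) ^ 2 := by
  rw [newtonQuadratic_sub_left h, newtonQuadratic_sub_right h, div_div_div_cancel_right₀ h,
    div_pow]

theorem cayley_inverse {α β w : K} (hαβ : α ≠ β) (hw : w ≠ β) :
    (α - β * ((w - α) / (w - β))) / (1 - (w - α) / (w - β)) = w := by
  have hwβ : w - β ≠ 0 := sub_ne_zero.mpr hw
  have hαβ' : α - β ≠ 0 := sub_ne_zero.mpr hαβ
  have hden : 1 - (w - α) / (w - β) = (α - β) / (w - β) := by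
    rw [one_sub_div hwβ]
    ring
  rw [hden, div_eq_iff (div_ne_zero hαβ' hwβ)]
  field_simp
  ring

theorem eval_X_sub_C_mul_X_sub_C (α β w : K) :
    ((X - C α) * (X - C β)).eval w = (w - α) * (w - β) := by
  simp

theorem eval_derivative_X_sub_C_mul_X_sub_C (α β w : K) :
    (derivative ((X - C α) * (X - C β))).eval w = (w - α) + (w - β) := by
  simp [add_comm]

end Algebra

section Voronoi

variable {𝕜 : Type*} [NormedField 𝕜] {α β w : 𝕜}

theorem add_ne_zero_of_norm_lt {E : Type*} [SeminormedAddCommGroup E] {a b : E}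
    (h : ‖a‖ < ‖b‖) : a + b ≠ 0 := by
  intro hab
  rw [eq_neg_of_add_eq_zero_left hab, norm_neg] at h
  exact lt_irrefl _ h

theorem ne_of_norm_sub_lt_norm_sub (h : ‖w - α‖ < ‖w - β‖) : α ≠ β := by
  rintro rfl
  exact lt_irrefl _ h

theorem ne_right_of_norm_sub_lt_norm_sub (h : ‖w - α‖ < ‖w - β‖) : w ≠ β := by
  rintro rfl
  rw [sub_self, norm_zero] at h
  exact (norm_nonneg _).not_gt h

theorem norm_cayley_lt_one (h : ‖w - α‖ < ‖w - β‖) : ‖(w - α) / (w - β)‖ < 1 := by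
  rw [norm_div]
  exact (div_lt_one ((norm_nonneg _).trans_lt h)).mpr h

theorem norm_newtonQuadratic_sub_lt (h : ‖w - α‖ < ‖w - β‖) :
    ‖newtonQuadratic α β w - α‖ < ‖newtonQuadratic α β w - β‖ := by
  have hd := add_ne_zero_of_norm_lt h
  rw [newtonQuadratic_sub_left hd, newtonQuadratic_sub_right hd, norm_div, norm_div, norm_pow,
    norm_pow]
  have := norm_pos_iff.mpr hd
  gcongr

end Voronoi

section Orbit

variable {𝕜 : Type*} [NormedField 𝕜] {α β : 𝕜} {z : ℕ → 𝕜}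

theorem norm_orbit_sub_lt (hz0 : ‖z 0 - α‖ < ‖z 0 - β‖)
    (hrec : ∀ k, z (k + 1) = newtonQuadratic α β (z k)) (k : ℕ) :
    ‖z k - α‖ < ‖z k - β‖ := by
  induction k with
  | zero => exact hz0
  | succ k ih => rw [hrec]; exact norm_newtonQuadratic_sub_lt ih

theorem orbit_cayley (hz0 : ‖z 0 - α‖ < ‖z 0 - β‖)
    (hrec : ∀ k, z (k + 1) = newtonQuadratic α β (z k)) (k : ℕ) :
    (z k - α) / (z k - β) = ((z 0 - α) / (z 0 - β)) ^ 2 ^ k := by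
  induction k with
  | zero => rw [pow_zero, pow_one]
  | succ k ih =>
    rw [hrec, newtonQuadratic_cayley (add_ne_zero_of_norm_lt (norm_orbit_sub_lt hz0 hrec k)), ih,
      ← pow_mul, ← pow_succ]

theorem tendsto_orbit (hz0 : ‖z 0 - α‖ < ‖z 0 - β‖)
    (hrec : ∀ k, z (k + 1) = newtonQuadratic α β (z k)) : Tendsto z atTop (𝓝 α) := by
  set q := (z 0 - α) / (z 0 - β)
  have hq : Tendsto (fun k ↦ q ^ 2 ^ k) atTop (𝓝 0) :=
    (tendsto_pow_atTop_nhds_zero_of_norm_lt_one (norm_cayley_lt_one hz0)).comp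
      (tendsto_pow_atTop_atTop_of_one_lt one_lt_two)
  have hlim := (tendsto_const_nhds (x := α)).sub (hq.const_mul β) |>.div
    (tendsto_const_nhds (x := (1 : 𝕜)).sub hq) (by rw [sub_zero]; exact one_ne_zero)
  rw [mul_zero, sub_zero, sub_zero, div_one] at hlim
  refine hlim.congr fun k ↦ ?_
  have hk := norm_orbit_sub_lt hz0 hrec k
  rw [Pi.div_apply, ← orbit_cayley hz0 hrec, cayley_inverse (ne_of_norm_sub_lt_norm_sub hk)
    (ne_right_of_norm_sub_lt_norm_sub hk)]

end Orbit

theorem newton_quadratic_voronoi_basin_general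
    (α β : ℂ)
    (p : Polynomial ℂ)
    (hp : p = (Polynomial.X - Polynomial.C α) * (Polynomial.X - Polynomial.C β))
    (z : ℕ → ℂ)
    (hz0 : ‖z 0 - α‖ < ‖z 0 - β‖)
    (hrec : ∀ k, z (k + 1) = z k - p.eval (z k) / p.derivative.eval (z k)) :
    (∀ k, p.derivative.eval (z k) ≠ 0) ∧ Filter.Tendsto z Filter.atTop (nhds α) := by
  subst hp
  have hnewton : ∀ k, z (k + 1) = newtonQuadratic α β (z k) := fun k ↦ by
    rw [hrec, eval_X_sub_C_mul_X_sub_C, eval_derivative_X_sub_C_mul_X_sub_C, newtonQuadratic]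
  refine ⟨fun k ↦ ?_, tendsto_orbit hz0 hnewton⟩
  rw [eval_derivative_X_sub_C_mul_X_sub_C]
  exact add_ne_zero_of_norm_lt (norm_orbit_sub_lt hz0 hnewton k)

/-- For a quadratic `p(z) = (z - α)(z - β)` with distinct roots, Newton's
method started at any seed strictly closer to `α` than to `β` is well defined for all
iterates and converges to `α`: the basin of attraction of `α` contains the open Voronoi
region of `α`. -/
theorem newton_quadratic_voronoi_basin
    (α β : ℂ) (hαβ : α ≠ β)
    (p : Polynomial ℂ)
    (hp : p = (Polynomial.X - Polynomial.C α) * (Polynomial.X - Polynomial.C β))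
    (z : ℕ → ℂ)
    (hz0 : ‖z 0 - α‖ < ‖z 0 - β‖)
    (hrec : ∀ k, z (k + 1) = z k - p.eval (z k) / p.derivative.eval (z k)) :
    (∀ k, p.derivative.eval (z k) ≠ 0) ∧ Filter.Tendsto z Filter.atTop (nhds α) :=
  newton_quadratic_voronoi_basin_general α β p hp z hz0 hrec
end

section
/- Let p be a complex polynomial of degree n ≥ 1 and θ a simple root of p (p(θ) = 0, p'(θ) ≠ 0). Fix an integer m ≥ 2 and define D_m and B_m by: D₀(z) = 1, D_k(z) = 0 for k < 0, D_m(z) = Σ_{i=1}^{n} (−1)^{i−1} p(z)^{i−1} (p^{(i)}(z)/i!) D_{m−i}(z), and B_m(z) = z − p(z)·D_{m−2}(z)/D_{m−1}(z). Then there exist δ > 0 and C > 0 such that for all z with |z − θ| < δ one has D_{m−1}(z) ≠ 0 and |B_m(z) − θ| ≤ C·|z − θ|^m. In particular, for any seed z₀ with |z₀ − θ| sufficiently small, the fixed-point iteration z_{k+1} = B_m(z_k) is well-defined and converges to θ with order of convergence m. -/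
/-!
Work in `R[X]⟦t⟧`. By Taylor's formula `p(X - p t) = p · G(t)` with
`G(t) = 1 - Σ_{i ≥ 1} (-p)^(i-1) (p⁽ⁱ⁾/i!) tⁱ`, and the recurrence for the `D_k` says exactly that
`Σ D_k tᵏ = G⁻¹`. Writing `p = (X - θ) q`, Taylor's formula for the product gives
`q(X - p t) · (X - θ - p t) · G⁻¹ = p`. The `i`-th coefficient of `q(X - p t)` is a multiple of
`pⁱ`, hence of `(X - θ)ⁱ`, and its constant term `q` is prime to `X - θ` because
`q(θ) = p'(θ) ≠ 0`; so, by induction on `k`, `(X - θ)^(k+1)` divides the coefficient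
`R_k = (X - θ) D_k - p D_(k-1)` of `(X - θ - p t) G⁻¹`. Finally
`B_m(z) - θ = R_(m-1)(z) / D_(m-1)(z)` and `D_(m-1)(θ) = p'(θ)^(m-1) ≠ 0`.
-/

namespace PowerSeries

theorem rescale_C {A : Type*} [CommSemiring A] (a c : A) : rescale a (C c) = C c := by
  refine ext fun n => ?_
  rw [coeff_rescale, coeff_C]
  split_ifs with hn <;> simp [hn]

theorem pow_succ_dvd_coeff_of_mul_eq_C {A : Type*} [CommRing A] [IsDomain A] {s : A}
    (hs : Prime s) {u v : A⟦X⟧} {c : A} (huv : u * v = C c) (hc : s ∣ c)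
    (hu : ∀ i, s ^ i ∣ coeff i u) (hu₀ : ¬ s ∣ coeff 0 u) (k : ℕ) :
    s ^ (k + 1) ∣ coeff k v := by
  induction k using Nat.strong_induction_on with
  | _ k ih =>
  have hprod : s ^ (k + 1) ∣ coeff k (u * v) := by
    rw [huv, coeff_C]
    split_ifs with hk
    · simpa [hk] using hc
    · exact dvd_zero _
  have h0k : (0, k) ∈ Finset.HasAntidiagonal.antidiagonal k :=
    Finset.HasAntidiagonal.mem_antidiagonal.mpr (zero_add k)
  have htail : s ^ (k + 1) ∣ ∑ ij ∈ (Finset.HasAntidiagonal.antidiagonal k).erase (0, k),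
      coeff ij.1 u * coeff ij.2 v := by
    refine Finset.dvd_sum fun ij hij => ?_
    obtain ⟨hne, hij⟩ := Finset.mem_erase.mp hij
    rw [Finset.HasAntidiagonal.mem_antidiagonal] at hij
    have hi : ij.1 ≠ 0 := fun h => hne (Prod.ext h (by omega))
    rw [show k + 1 = ij.1 + (ij.2 + 1) by omega, pow_add]
    exact mul_dvd_mul (hu _) (ih _ (by omega))
  rw [coeff_mul, ← Finset.add_sum_erase _ _ h0k] at hprod
  exact hs.pow_dvd_of_dvd_mul_left _ hu₀ ((dvd_add_left htail).mp hprod)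

end PowerSeries

open Polynomial

namespace Polynomial

/-- `f(X + t)`, as a power series in `t`; its rescaling by `a` is `f(X + a t)`. -/
noncomputable def hasseSeries {R : Type*} [CommSemiring R] (f : R[X]) : PowerSeries R[X] :=
  PowerSeries.mk fun i => hasseDeriv i f

theorem hasseSeries_mul {R : Type*} [CommSemiring R] (f g : R[X]) :
    hasseSeries (f * g) = hasseSeries f * hasseSeries g := by
  ext k
  simp only [hasseSeries, PowerSeries.coeff_mk, PowerSeries.coeff_mul, hasseDeriv_mul]

theorem hasseSeries_X_sub_C {R : Type*} [CommRing R] (θ : R) :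
    hasseSeries (X - C θ) = PowerSeries.C (X - C θ) + PowerSeries.X := by
  ext (_ | _ | k)
  · simp [hasseSeries]
  · simp [hasseSeries, PowerSeries.coeff_X]
  · rw [hasseSeries, PowerSeries.coeff_mk, hasseDeriv_eq_zero_of_lt_natDegree _ _
      ((natDegree_X_sub_C_le θ).trans_lt (by omega))]
    simp [PowerSeries.coeff_X]

theorem eval_iterate_derivative_div_factorial {K : Type*} [Field K] [CharZero K] (p : K[X])
    (i : ℕ) (z : K) : (derivative^[i] p).eval z / i.factorial = (hasseDeriv i p).eval z := by
  rw [← factorial_smul_hasseDeriv, LinearMap.smul_apply, eval_smul, nsmul_eq_mul,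
    mul_div_cancel_left₀ _ (Nat.cast_ne_zero.mpr i.factorial_ne_zero)]

end Polynomial

namespace BasicFamily

variable {R : Type*} [CommRing R]

noncomputable def denom (p : R[X]) : PowerSeries R[X] :=
  PowerSeries.mk fun i => if i = 0 then 1 else -((-p) ^ (i - 1) * hasseDeriv i p)

theorem rescale_neg_hasseSeries_self (p : R[X]) :
    PowerSeries.rescale (-p) (hasseSeries p) = PowerSeries.C p * denom p := by
  refine PowerSeries.ext fun i => ?_
  rcases i with _ | i
  · simp [hasseSeries, denom]
  · simp only [hasseSeries, denom, PowerSeries.rescale_mk, PowerSeries.coeff_mk,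
      PowerSeries.coeff_C_mul, Nat.add_sub_cancel, if_neg i.succ_ne_zero]
    ring

/-- `Σ_k D_k tᵏ`, where the `D_k ∈ R[X]` are the polynomials of the basic family. -/
noncomputable def series (p : R[X]) : PowerSeries R[X] :=
  PowerSeries.invOfUnit (denom p) 1

theorem series_mul_denom (p : R[X]) : series p * denom p = 1 :=
  PowerSeries.invOfUnit_mul _ _ (by simp [denom])

/-- `Σ_k R_k tᵏ` with `R_k = (X - θ) D_k - p D_(k-1)`, so that
`B_(k+1)(z) - θ = R_k(z) / D_k(z)`. -/
noncomputable def residual (θ : R) (p : R[X]) : PowerSeries R[X] :=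
  (PowerSeries.C (X - C θ) - PowerSeries.C p * PowerSeries.X) * series p

theorem coeff_succ_residual (θ : R) (p : R[X]) (k : ℕ) :
    PowerSeries.coeff (k + 1) (residual θ p) =
      (X - C θ) * PowerSeries.coeff (k + 1) (series p) - p * PowerSeries.coeff k (series p) := by
  rw [residual, sub_mul, map_sub, PowerSeries.coeff_C_mul, mul_assoc, PowerSeries.coeff_C_mul,
    PowerSeries.coeff_succ_X_mul]

theorem rescale_hasseSeries_mul_residual {p q : R[X]} {θ : R} (hpq : p = (X - C θ) * q) :
    PowerSeries.rescale (-p) (hasseSeries q) * residual θ p = PowerSeries.C p := by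
  have hshift : PowerSeries.rescale (-p) (hasseSeries p) =
      (PowerSeries.C (X - C θ) - PowerSeries.C p * PowerSeries.X) *
        PowerSeries.rescale (-p) (hasseSeries q) := by
    conv_lhs => rw [hpq]
    rw [hasseSeries_mul, map_mul, hasseSeries_X_sub_C, map_add, PowerSeries.rescale_X,
      ← hpq, PowerSeries.rescale_C, map_neg, neg_mul, ← sub_eq_add_neg]
  rw [residual, mul_left_comm, ← mul_assoc, ← hshift, rescale_neg_hasseSeries_self, mul_assoc,
    mul_comm (denom p), series_mul_denom, mul_one]

theorem X_sub_C_pow_succ_dvd_coeff_residual [IsDomain R] {p : R[X]} {θ : R} (hθ : p.IsRoot θ)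
    (hθ' : p.derivative.eval θ ≠ 0) (k : ℕ) :
    (X - C θ) ^ (k + 1) ∣ PowerSeries.coeff k (residual θ p) := by
  obtain ⟨q, hpq⟩ := dvd_iff_isRoot.mpr hθ
  have hqθ : ¬ X - C θ ∣ q := by
    rw [dvd_iff_isRoot, IsRoot.def]
    simpa [hpq, derivative_mul] using hθ'
  refine PowerSeries.pow_succ_dvd_coeff_of_mul_eq_C (prime_X_sub_C θ)
    (rescale_hasseSeries_mul_residual hpq) ⟨q, hpq⟩ (fun i => ?_)
    (by simpa [hasseSeries] using hqθ) k
  rw [PowerSeries.coeff_rescale, hasseSeries, PowerSeries.coeff_mk, hpq]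
  exact dvd_mul_of_dvd_left (pow_dvd_pow_of_dvd (dvd_neg.mpr (dvd_mul_right _ _)) i) _

theorem eval_coeff_series {p : R[X]} {z : R} {d : ℕ → R} (h₀ : d 0 = 1)
    (hsucc : ∀ k, d (k + 1) = ∑ i ∈ Finset.range (k + 1),
      (-p.eval z) ^ i * (hasseDeriv (i + 1) p).eval z * d (k - i)) (k : ℕ) :
    (PowerSeries.coeff k (series p)).eval z = d k := by
  have hmul : PowerSeries.map (evalRingHom z) (denom p) * PowerSeries.mk d = 1 := by
    refine PowerSeries.ext fun k => ?_
    rw [PowerSeries.coeff_mul, Finset.Nat.sum_antidiagonal_eq_sum_range_succ_mk]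
    rcases k with _ | k
    · simp [denom, h₀]
    · simp [Finset.sum_range_succ', denom, PowerSeries.coeff_map, hsucc]
  have hinv := congrArg (PowerSeries.map (evalRingHom z)) (series_mul_denom p)
  rw [map_mul, map_one] at hinv
  simpa [PowerSeries.coeff_map] using
    congrArg (PowerSeries.coeff k) (left_inv_eq_right_inv hinv hmul)

theorem eval_coeff_series_of_isRoot {p : R[X]} {θ : R} (hθ : p.IsRoot θ) (k : ℕ) :
    (PowerSeries.coeff k (series p)).eval θ = p.derivative.eval θ ^ k := by
  refine eval_coeff_series (pow_zero _) (fun k => ?_) k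
  rw [Finset.sum_range_succ', Finset.sum_eq_zero fun i _ => by simp [hθ.eq_zero]]
  simp [hasseDeriv_one, pow_succ, mul_comm]

theorem succ_eq_sum_range_of_recurrence {K : Type*} [Field K] [CharZero K] {p : K[X]} {n : ℕ}
    (hdeg : p.natDegree ≤ n) {D : ℤ → K → K}
    (hDneg : ∀ k : ℤ, k < 0 → ∀ z : K, D k z = 0)
    (hDrec : ∀ m' : ℤ, 1 ≤ m' → ∀ z : K, D m' z =
      ∑ i ∈ Finset.Icc 1 n, (-1 : K) ^ (i - 1) * (p.eval z) ^ (i - 1) *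
        (((derivative^[i] p).eval z) / (Nat.factorial i)) * D (m' - i) z)
    (k : ℕ) (z : K) :
    D (k + 1 : ℕ) z = ∑ i ∈ Finset.range (k + 1),
      (-p.eval z) ^ i * (hasseDeriv (i + 1) p).eval z * D (k - i : ℕ) z := by
  set f : ℕ → K := fun i => (-p.eval z) ^ i * (hasseDeriv (i + 1) p).eval z * D ((k : ℤ) - i) z
  have hf_deg (i : ℕ) (hi : n ≤ i) : f i = 0 := by
    simp [f, hasseDeriv_eq_zero_of_lt_natDegree p (i + 1) (by omega)]
  have hf_neg (i : ℕ) (hi : k + 1 ≤ i) : f i = 0 := by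
    simp [f, hDneg ((k : ℤ) - i) (by omega)]
  calc D (k + 1 : ℕ) z = ∑ i ∈ Finset.range n, f i := by
        rw [hDrec _ (by omega), ← Finset.Ico_add_one_right_eq_Icc, Finset.sum_Ico_eq_sum_range]
        refine Finset.sum_congr rfl fun i _ => ?_
        rw [eval_iterate_derivative_div_factorial, add_tsub_cancel_left, add_comm 1 i]
        simp only [f, neg_pow (eval z p)]
        congr 2
        omega
    _ = ∑ i ∈ Finset.range (n + k + 1), f i :=
        Finset.sum_subset (Finset.range_subset_range.mpr (by omega)) fun i _ hi =>
          hf_deg i (by simpa using hi)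
    _ = ∑ i ∈ Finset.range (k + 1), f i :=
        (Finset.sum_subset (Finset.range_subset_range.mpr (by omega)) fun i _ hi =>
          hf_neg i (by simpa using hi)).symm
    _ = _ := Finset.sum_congr rfl fun i hi => by
        rw [Finset.mem_range] at hi
        simp only [f]
        rw [Nat.cast_sub (by omega)]

end BasicFamily

theorem exists_forall_dist_lt_ne_zero_and_norm_div_le {α 𝕜 : Type*} [PseudoMetricSpace α]
    [NormedField 𝕜] {f g : α → 𝕜} {x : α} (hf : ContinuousAt f x) (hg : ContinuousAt g x)
    (hgx : g x ≠ 0) : ∃ δ > 0, ∃ C > 0, ∀ y, dist y x < δ → g y ≠ 0 ∧ ‖f y / g y‖ ≤ C := by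
  have hne : ∀ᶠ y in nhds x, g y ≠ 0 := hg.eventually_ne hgx
  have hlt : ∀ᶠ y in nhds x, ‖f y / g y‖ < ‖f x / g x‖ + 1 :=
    (hf.div hg hgx).norm.eventually (gt_mem_nhds (lt_add_one _))
  obtain ⟨δ, hδ, h⟩ := Metric.eventually_nhds_iff.mp (hne.and hlt)
  exact ⟨δ, hδ, ‖f x / g x‖ + 1, by positivity, fun y hy => ⟨(h hy).1, (h hy).2.le⟩⟩

open BasicFamily

theorem basic_family_local_order_m_convergence_general
    (p : Polynomial ℂ) (n : ℕ) (hdeg : p.natDegree = n)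
    (m : ℕ) (hm : 2 ≤ m)
    (D : ℤ → ℂ → ℂ)
    (hD0 : ∀ z : ℂ, D 0 z = 1)
    (hDneg : ∀ k : ℤ, k < 0 → ∀ z : ℂ, D k z = 0)
    (hDrec : ∀ m' : ℤ, 1 ≤ m' → ∀ z : ℂ, D m' z =
      ∑ i ∈ Finset.Icc 1 n, (-1 : ℂ) ^ (i - 1) * (p.eval z) ^ (i - 1) *
        (((Polynomial.derivative^[i] p).eval z) / (Nat.factorial i)) * D (m' - i) z)
    (θ : ℂ) (hθ : p.eval θ = 0) (hθ' : p.derivative.eval θ ≠ 0) :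
    ∃ δ > (0 : ℝ), ∃ C > (0 : ℝ), ∀ z : ℂ, ‖z - θ‖ < δ →
      D ((m : ℤ) - 1) z ≠ 0 ∧
      ‖(z - p.eval z * D ((m : ℤ) - 2) z / D ((m : ℤ) - 1) z) - θ‖ ≤
        C * ‖z - θ‖ ^ m := by
  obtain ⟨k, rfl⟩ : ∃ k, m = k + 2 := ⟨m - 2, by omega⟩
  set E : ℕ → ℂ[X] := fun j => PowerSeries.coeff j (series p)
  have hD (j : ℕ) (z : ℂ) : D j z = (E j).eval z :=
    (eval_coeff_series (d := fun j => D j z) (hD0 z)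
      (fun i => succ_eq_sum_range_of_recurrence hdeg.le hDneg hDrec i z) j).symm
  obtain ⟨H, hH⟩ := X_sub_C_pow_succ_dvd_coeff_residual hθ hθ' (k + 1)
  have hE : (E (k + 1)).eval θ ≠ 0 := by
    rw [eval_coeff_series_of_isRoot hθ]
    exact pow_ne_zero _ hθ'
  obtain ⟨δ, hδ, C, hC, hbound⟩ := exists_forall_dist_lt_ne_zero_and_norm_div_le
    H.continuous.continuousAt (E (k + 1)).continuous.continuousAt hE
  refine ⟨δ, hδ, C, hC, fun z hz => ?_⟩
  obtain ⟨hne, hle⟩ := hbound z (by rwa [dist_eq_norm])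
  have hR := congrArg (eval z) ((coeff_succ_residual θ p k).symm.trans hH)
  simp only [eval_sub, eval_mul, eval_X, eval_C, eval_pow] at hR
  rw [show ((k + 2 : ℕ) : ℤ) - 1 = (k + 1 : ℕ) by omega, show ((k + 2 : ℕ) : ℤ) - 2 = k by omega,
    hD, hD]
  refine ⟨hne, ?_⟩
  calc ‖z - p.eval z * (E k).eval z / (E (k + 1)).eval z - θ‖
      = ‖(z - θ) ^ (k + 2) * (H.eval z / (E (k + 1)).eval z)‖ := by
        congr 1
        field_simp
        linear_combination hR
    _ ≤ C * ‖z - θ‖ ^ (k + 2) := by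
        rw [norm_mul, norm_pow, mul_comm]
        exact mul_le_mul_of_nonneg_right hle (by positivity)

/-- Local convergence of order `m` of the basic family member `B_m` at a
simple root `θ` of `p`: there are `δ > 0` and `C > 0` such that for all `z` with
`|z - θ| < δ`, `D_{m-1}(z) ≠ 0` and `|B_m(z) - θ| ≤ C·|z - θ|^m`. -/
theorem basic_family_local_order_m_convergence
    (p : Polynomial ℂ) (n : ℕ) (hn : 1 ≤ n) (hdeg : p.natDegree = n)
    (m : ℕ) (hm : 2 ≤ m)
    (D : ℤ → ℂ → ℂ)
    (hD0 : ∀ z : ℂ, D 0 z = 1)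
    (hDneg : ∀ k : ℤ, k < 0 → ∀ z : ℂ, D k z = 0)
    (hDrec : ∀ m' : ℤ, 1 ≤ m' → ∀ z : ℂ, D m' z =
      ∑ i ∈ Finset.Icc 1 n, (-1 : ℂ) ^ (i - 1) * (p.eval z) ^ (i - 1) *
        (((Polynomial.derivative^[i] p).eval z) / (Nat.factorial i)) * D (m' - i) z)
    (θ : ℂ) (hθ : p.eval θ = 0) (hθ' : p.derivative.eval θ ≠ 0) :
    ∃ δ > (0 : ℝ), ∃ C > (0 : ℝ), ∀ z : ℂ, ‖z - θ‖ < δ →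
      D ((m : ℤ) - 1) z ≠ 0 ∧
      ‖(z - p.eval z * D ((m : ℤ) - 2) z / D ((m : ℤ) - 1) z) - θ‖ ≤
        C * ‖z - θ‖ ^ m :=
  basic_family_local_order_m_convergence_general p n hdeg m hm D hD0 hDneg hDrec θ hθ hθ'
end
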